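/- arXiv:2106.02357 — 2 statements merged into one kernel-verified Lean document; each statement's English description precedes it below -/
import Mathlib

section
/- Let X be a real N × d matrix each of whose columns has ℓ2 norm 1, and assume the Gram matrix XᵀX is invertible. Then for every positive real α with α ≤ 2/(d+1), the matrix series α·∑_{i=0}^{∞} (I − α XᵀX)^i converges and equals (XᵀX)^{−1}. -/
open Matrix Filter Finset Topology Unitary
open scoped ComplexOrder

/-!
The Gram matrix `G = XᵀX` is positive semidefinite, hence positive definite as it is invertible,
and its trace is `d` because the columns of `X` are unit vectors. So its eigenvalues lie in
`(0, d]`, and those of `I - αG` in `(-1, 1)` since `αd ≤ 2d/(d+1) < 2`. Diagonalising `G` by an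
orthogonal matrix then gives `(I - αG)ⁿ → 0`, and the geometric-sum identity
`αG · ∑_{i<n} (I - αG)^i = I - (I - αG)ⁿ` yields the limit `G⁻¹`.
-/

theorem tendsto_geom_sum_of_tendsto_pow {R : Type*} [Ring R] [TopologicalSpace R]
    [IsTopologicalRing R] {M B : R} (hB : B * (1 - M) = 1)
    (hM : Tendsto (M ^ ·) atTop (𝓝 0)) :
    Tendsto (fun n => ∑ i ∈ range n, M ^ i) atTop (𝓝 B) := by
  have hsum : ∀ n, ∑ i ∈ range n, M ^ i = B * (1 - M ^ n) := fun n => by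
    rw [← mul_neg_geom_sum, ← mul_assoc, hB, one_mul]
  simpa [hsum] using (tendsto_const_nhds (x := B)).mul ((tendsto_const_nhds (x := 1)).sub hM)

theorem abs_one_sub_mul_lt_one {α t d : ℝ} (hα : 0 < α) (ht : 0 < t) (htd : t ≤ d)
    (hαd : α ≤ 2 / (d + 1)) : |1 - α * t| < 1 := by
  have hd : 0 < d + 1 := by linarith
  have hαt : α * t ≤ 2 / (d + 1) * d := mul_le_mul hαd htd ht.le (by positivity)
  have h2 : 2 / (d + 1) * d < 2 := by
    rw [div_mul_eq_mul_div, div_lt_iff₀ hd]; linarith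
  rw [abs_lt]; constructor <;> nlinarith [mul_pos hα ht]

namespace Matrix

theorem trace_transpose_mul_self_eq_card {m n : Type*} [Fintype m] [Fintype n]
    {X : Matrix m n ℝ} (hcol : ∀ j, ∑ i, X i j ^ 2 = 1) :
    (Xᵀ * X).trace = Fintype.card n := by
  simp [trace, mul_apply, ← sq, hcol]

variable {n 𝕜 : Type*} [Fintype n] [DecidableEq n] [RCLike 𝕜]

theorem tendsto_diagonal_pow_nhds_zero {c : n → 𝕜} (hc : ∀ i, ‖c i‖ < 1) :
    Tendsto (diagonal c ^ ·) atTop (𝓝 0) := by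
  simp_rw [diagonal_pow, ← diagonal_zero]
  exact (continuous_id.matrix_diagonal.tendsto _).comp <|
    tendsto_pi_nhds.mpr fun i => tendsto_pow_atTop_nhds_zero_of_norm_lt_one (hc i)

theorem IsHermitian.one_sub_smul_eq_conjStarAlgAut {A : Matrix n n 𝕜} (hA : A.IsHermitian)
    (α : ℝ) :
    1 - α • A = conjStarAlgAut 𝕜 _ hA.eigenvectorUnitary
      (diagonal fun i => ((1 - α * hA.eigenvalues i : ℝ) : 𝕜)) := by
  conv_lhs => rw [hA.spectral_theorem]
  rw [RCLike.real_smul_eq_coe_smul (K := 𝕜),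
    ← map_one (conjStarAlgAut 𝕜 _ hA.eigenvectorUnitary), ← map_smul, ← map_sub]
  congr 1
  ext i j
  rcases eq_or_ne i j with rfl | hij
  · simp
  · simp [hij]

theorem IsHermitian.tendsto_one_sub_smul_pow_nhds_zero {A : Matrix n n 𝕜} (hA : A.IsHermitian)
    {α : ℝ} (h : ∀ i, |1 - α * hA.eigenvalues i| < 1) :
    Tendsto ((1 - α • A) ^ ·) atTop (𝓝 0) := by
  simp_rw [hA.one_sub_smul_eq_conjStarAlgAut, ← map_pow, conjStarAlgAut_apply]
  have hD := tendsto_diagonal_pow_nhds_zero (c := fun i => ((1 - α * hA.eigenvalues i : ℝ) : 𝕜))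
    fun i => (RCLike.norm_ofReal _).trans_lt (h i)
  simpa using (tendsto_const_nhds.mul hD).mul
    (tendsto_const_nhds (x := star (hA.eigenvectorUnitary : Matrix n n 𝕜)))

theorem PosSemidef.eigenvalues_le_re_trace {A : Matrix n n 𝕜} (hA : A.PosSemidef) (i : n) :
    hA.1.eigenvalues i ≤ RCLike.re A.trace := by
  rw [hA.1.trace_eq_sum_eigenvalues, map_sum]
  simpa using single_le_sum (fun j _ => hA.eigenvalues_nonneg j) (mem_univ i)

end Matrix

/-- For an `N × d` real matrix `X` with `ℓ2`-normalized columns and invertible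
Gram matrix `XᵀX`, for every positive `α ≤ 2/(d+1)` the series
`α • ∑_{i=0}^{∞} (I - α XᵀX)^i` converges to `(XᵀX)⁻¹`. -/
theorem gram_inverse_neumann_series (N d : ℕ) (X : Matrix (Fin N) (Fin d) ℝ)
    (hcol : ∀ j : Fin d, ∑ i : Fin N, (X i j) ^ 2 = 1)
    (hinv : IsUnit (Xᵀ * X))
    (α : ℝ) (hα : 0 < α) (hα' : α ≤ 2 / ((d : ℝ) + 1)) :
    Tendsto
      (fun n : ℕ => α • ∑ i ∈ Finset.range (n + 1), ((1 : Matrix (Fin d) (Fin d) ℝ) - α • (Xᵀ * X)) ^ i)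
      atTop (nhds ((Xᵀ * X)⁻¹)) := by
  set G := Xᵀ * X
  have hG : G.PosDef := by
    refine (PosSemidef.posDef_iff_isUnit ?_).mpr hinv
    simpa using posSemidef_conjTranspose_mul_self X
  have hle_d : ∀ i, hG.1.eigenvalues i ≤ d := fun i => by
    simpa [G, trace_transpose_mul_self_eq_card hcol] using hG.posSemidef.eigenvalues_le_re_trace i
  have hcontract : ∀ i, |1 - α * hG.1.eigenvalues i| < 1 := fun i =>
    abs_one_sub_mul_lt_one hα (hG.eigenvalues_pos i) (hle_d i) hα'
  have hB : (α⁻¹ • G⁻¹) * (1 - (1 - α • G)) = 1 := by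
    rw [sub_sub_cancel, smul_mul_smul_comm, inv_mul_cancel₀ hα.ne', one_smul,
      nonsing_inv_mul G ((isUnit_iff_isUnit_det G).mp hinv)]
  have hsum := (tendsto_geom_sum_of_tendsto_pow hB
    (hG.1.tendsto_one_sub_smul_pow_nhds_zero hcontract)).const_smul α
  rw [smul_smul, mul_inv_cancel₀ hα.ne', one_smul] at hsum
  exact hsum.comp (tendsto_add_atTop_nat 1)
end

section
/- Let X be a real N × d matrix each of whose columns has ℓ2 norm 1, with XᵀX invertible, let α be a positive real with α ≤ 2/(d+1), and set B = I − α·XᵀX. Then every eigenvalue of B lies in the open interval (−1, 1). -/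
open Matrix Finset

/-!
If `(I - α XᵀX) v = μ v` with `v ≠ 0`, pairing with `v` gives `α ‖Xv‖² = (1 - μ) ‖v‖²`.
Invertibility of `XᵀX` makes `‖Xv‖² > 0`, hence `μ < 1`; Cauchy–Schwarz row by row bounds
`‖Xv‖² ≤ ‖X‖_F² ‖v‖² = d ‖v‖²`, hence `1 - μ ≤ α d ≤ 2d/(d+1) < 2`, i.e. `μ > -1`.
-/

namespace Matrix

variable {m n R : Type*} [Fintype m] [Fintype n]

theorem dotProduct_transpose_mul_self_mulVec [CommSemiring R] (A : Matrix m n R) (v : n → R) :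
    v ⬝ᵥ (Aᵀ * A) *ᵥ v = A *ᵥ v ⬝ᵥ A *ᵥ v := by
  rw [← mulVec_mulVec, dotProduct_mulVec, vecMul_transpose]

theorem mulVec_ne_zero_of_isUnit_transpose_mul [DecidableEq n] [CommRing R]
    {A : Matrix m n R} (hA : IsUnit (Aᵀ * A)) {v : n → R} (hv : v ≠ 0) : A *ᵥ v ≠ 0 := by
  intro hAv
  refine hv (mulVec_injective_of_isUnit hA ?_)
  rw [← mulVec_mulVec, hAv, mulVec_zero, mulVec_zero]

theorem dotProduct_self_pos [Ring R] [LinearOrder R] [IsStrictOrderedRing R] {v : n → R}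
    (hv : v ≠ 0) : 0 < v ⬝ᵥ v :=
  (Finset.sum_nonneg fun i _ => mul_self_nonneg (v i)).lt_of_ne' (dotProduct_self_eq_zero.not.2 hv)

theorem mulVec_dotProduct_self_le [CommRing R] [LinearOrder R] [IsStrictOrderedRing R]
    (A : Matrix m n R) (v : n → R) :
    A *ᵥ v ⬝ᵥ A *ᵥ v ≤ (∑ i, ∑ j, A i j ^ 2) * (v ⬝ᵥ v) := by
  rw [Finset.sum_mul]
  refine Finset.sum_le_sum fun i _ => ?_
  simpa only [mulVec, dotProduct, ← sq] using Finset.sum_mul_sq_le_sq_mul_sq univ (A i) v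

theorem mul_dotProduct_mulVec_of_one_sub_smul_mulVec_eq [DecidableEq n] [CommRing R]
    {G : Matrix n n R} {α μ : R} {v : n → R} (h : (1 - α • G) *ᵥ v = μ • v) :
    α * (v ⬝ᵥ G *ᵥ v) = (1 - μ) * (v ⬝ᵥ v) := by
  have hGv : α • (G *ᵥ v) = (1 - μ) • v := by
    rw [sub_mulVec, one_mulVec, smul_mulVec] at h
    rw [sub_smul, one_smul, ← h, sub_sub_cancel]
  rw [← smul_eq_mul, ← dotProduct_smul, hGv, dotProduct_smul, smul_eq_mul]

end Matrix

/-- If each column of `X` is `ℓ2`-normalized, `XᵀX` is invertible,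
`0 < α ≤ 2/(d+1)` and `B = I - α • XᵀX`, then every eigenvalue of `B` lies in
the open interval `(-1, 1)`. -/
theorem eigenvalues_one_sub_smul_gram_mem_Ioo (N d : ℕ) (X : Matrix (Fin N) (Fin d) ℝ)
    (hcol : ∀ j : Fin d, ∑ i : Fin N, (X i j) ^ 2 = 1)
    (hinv : IsUnit (Xᵀ * X))
    (α : ℝ) (hα : 0 < α) (hα' : α ≤ 2 / ((d : ℝ) + 1))
    (B : Matrix (Fin d) (Fin d) ℝ)
    (hB : B = (1 : Matrix (Fin d) (Fin d) ℝ) - α • (Xᵀ * X))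
    (μ : ℝ) (v : Fin d → ℝ) (hv : v ≠ 0)
    (hμ : B.mulVec v = μ • v) :
    -1 < μ ∧ μ < 1 := by
  subst hB
  have hrayleigh := mul_dotProduct_mulVec_of_one_sub_smul_mulVec_eq hμ
  rw [dotProduct_transpose_mul_self_mulVec] at hrayleigh
  have hXv := dotProduct_self_pos (mulVec_ne_zero_of_isUnit_transpose_mul hinv hv)
  have hvv := dotProduct_self_pos hv
  have hfrob : ∑ i, ∑ j, X i j ^ 2 = d := by
    rw [Finset.sum_comm]; simp [hcol]
  have hbound := mulVec_dotProduct_self_le X v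
  rw [hfrob] at hbound
  have hαd : α * ((d : ℝ) + 1) ≤ 2 := (le_div_iff₀ (by positivity)).mp hα'
  constructor
  · nlinarith [mul_le_mul_of_nonneg_left hbound hα.le]
  · nlinarith [mul_pos hα hXv]
end
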